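/- arXiv:2309.09267 — 4 statements merged into one kernel-verified Lean document; each statement's English description precedes it below -/
import Mathlib

section
/- Let σ₀ = Cone(ν₁,…,ν_{n+1}) ⊂ N_ℝ be a flipping cone with wall relation ∑ bᵢνᵢ = 0, J₋ = {i : bᵢ < 0}, J₊ = {i : bᵢ > 0}. Then for any subset J ⊆ {1,…,n+1} with J₊ ⊄ J, the cone σ_J = Cone(νᵢ : i ∈ J) is contained in σ₀, and the collection Σ₋ = {σ_J : J₊ ⊄ J} covers σ₀, i.e. every point of σ₀ lies in some σ_J with J₊ ⊄ J. -/
/-- The cone generated by the vectors `ν i` for `i ∈ J`, inside `ℝⁿ`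
(the vectors live in the lattice `ℤⁿ`). -/
noncomputable def coneOf {n : ℕ} (ν : Fin (n+1) → (Fin n → ℤ))
    (J : Set (Fin (n+1))) : Set (Fin n → ℝ) :=
  {x | ∃ lam : Fin (n+1) → ℝ, (∀ i, 0 ≤ lam i) ∧ (∀ i, i ∉ J → lam i = 0) ∧
    x = ∑ i, lam i • (fun j => (ν i j : ℝ))}

/-- for a flipping cone `σ₀ = Cone(ν₁,…,ν_{n+1})` with wall relation
`∑ bᵢ νᵢ = 0`, every cone `σ_J` with `J₊ ⊄ J` is contained in `σ₀`, and the
collection `Σ₋ = {σ_J : J₊ ⊄ J}` covers `σ₀`. -/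
theorem stmt0 {n : ℕ} (hn : 3 ≤ n) (ν : Fin (n+1) → (Fin n → ℤ))
    (hprim : ∀ i, Finset.univ.gcd (ν i) = 1)
    (hfull : Submodule.span ℝ (Set.range fun i => (fun j => (ν i j : ℝ))) = ⊤)
    (hconvex : ∀ x ∈ coneOf ν Set.univ, -x ∈ coneOf ν Set.univ → x = 0)
    (b : Fin (n+1) → ℤ) (hwall : ∑ i, b i • ν i = 0)
    (hJm : 2 ≤ (Finset.univ.filter fun i => b i < 0).card)
    (hJp : 2 ≤ (Finset.univ.filter fun i => 0 < b i).card) :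
    (∀ J : Set (Fin (n+1)), ¬ ({i | 0 < b i} ⊆ J) → coneOf ν J ⊆ coneOf ν Set.univ) ∧
    (∀ x ∈ coneOf ν Set.univ, ∃ J : Set (Fin (n+1)),
      ¬ ({i | 0 < b i} ⊆ J) ∧ x ∈ coneOf ν J) := by
  constructor
  · rintro J hJ x ⟨lam, h0, -, hx⟩
    exact ⟨lam, h0, fun i hi => absurd (Set.mem_univ i) hi, hx⟩
  · rintro x ⟨lam, h0, -, hx⟩
    have hSne : (Finset.univ.filter fun i => 0 < b i).Nonempty :=
      Finset.card_pos.mp (by omega)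
    obtain ⟨i₀, hi₀S, hmin⟩ :=
      (Finset.univ.filter fun i => 0 < b i).exists_min_image
        (fun i => lam i / (b i : ℝ)) hSne
    have hbi₀ : 0 < b i₀ := (Finset.mem_filter.mp hi₀S).2
    have hbi₀R : (0:ℝ) < (b i₀ : ℝ) := by exact_mod_cast hbi₀
    set t : ℝ := lam i₀ / (b i₀ : ℝ) with ht
    have ht0 : 0 ≤ t := div_nonneg (h0 i₀) hbi₀R.le
    have hw : ∀ j, ∑ i, (b i : ℝ) * (ν i j : ℝ) = 0 := by
      intro j
      have h := congrFun hwall j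
      simp only [Finset.sum_apply, Pi.smul_apply, smul_eq_mul, Pi.zero_apply] at h
      exact_mod_cast h
    refine ⟨{i | i ≠ i₀}, ?_, fun i => lam i - t * (b i : ℝ), ?_, ?_, ?_⟩
    · intro h
      exact (h (Set.mem_setOf_eq ▸ hbi₀)) rfl
    · intro i
      show 0 ≤ lam i - t * (b i : ℝ)
      by_cases hbi : 0 < b i
      · have hiS : i ∈ Finset.univ.filter fun i => 0 < b i :=
          Finset.mem_filter.mpr ⟨Finset.mem_univ i, hbi⟩
        have hle := hmin i hiS
        have hbiR : (0:ℝ) < (b i : ℝ) := by exact_mod_cast hbi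
        have h2 : t * (b i:ℝ) ≤ lam i := (le_div_iff₀ hbiR).mp hle
        linarith
      · have hbiR : (b i : ℝ) ≤ 0 := by exact_mod_cast (not_lt.mp hbi)
        nlinarith [h0 i]
    · intro i hi
      simp only [Set.mem_setOf_eq, not_not] at hi
      subst hi
      show lam i - t * (b i : ℝ) = 0
      rw [ht, div_mul_cancel₀ _ (ne_of_gt hbi₀R), sub_self]
    · rw [hx]
      funext j
      simp only [Finset.sum_apply, Pi.smul_apply, smul_eq_mul]
      have key : ∑ i, (lam i - t * (b i:ℝ)) * (ν i j : ℝ)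
          = ∑ i, lam i * (ν i j:ℝ) - t * ∑ i, (b i:ℝ) * (ν i j:ℝ) := by
        rw [Finset.mul_sum, ← Finset.sum_sub_distrib]
        apply Finset.sum_congr rfl
        intros; ring
      rw [key, hw j, mul_zero, sub_zero]
end

section
/- Let σ₀ be a flipping cone in N_ℝ with data as above. Every point x ∈ σ₀ also lies in some cone σ_J with J₋ ⊄ J; that is, the collection Σ₊ = {σ_J : J₋ ⊄ J} covers σ₀. -/
/-!
Write `x ∈ σ₀` as `x = ∑ λᵢ νᵢ` with `λ ≥ 0` and slide along the wall relation:
`x = ∑ (λᵢ + t bᵢ) νᵢ` for every `t`. Increasing `t` from `0` keeps the coefficients with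
`bᵢ ≥ 0` nonnegative, and the first time a coefficient with `bᵢ < 0` reaches zero, at
`t = min_{bᵢ < 0} λᵢ / (-bᵢ)`, exhibits `x` in `σ_J` for `J` the complement of an index of `J₋`.
-/

theorem coneOf_mono {n : ℕ} (ν : Fin (n+1) → (Fin n → ℤ)) {J K : Set (Fin (n+1))}
    (hJK : J ⊆ K) : coneOf ν J ⊆ coneOf ν K := by
  rintro x ⟨lam, hnonneg, hsupp, rfl⟩
  exact ⟨lam, hnonneg, fun i hi => hsupp i fun hiJ => hi (hJK hiJ), rfl⟩

theorem exists_shift_nonneg_and_eq_zero {ι 𝕜 : Type*} [Fintype ι] [Field 𝕜] [LinearOrder 𝕜]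
    [IsStrictOrderedRing 𝕜] {lam b : ι → 𝕜} (hlam : ∀ i, 0 ≤ lam i) (hb : ∃ i, b i < 0) :
    ∃ t : 𝕜, ∃ i₀, b i₀ < 0 ∧ (∀ i, 0 ≤ lam i + t * b i) ∧ lam i₀ + t * b i₀ = 0 := by
  have hne : (Finset.univ.filter fun i => b i < 0).Nonempty := by
    obtain ⟨i, hi⟩ := hb
    exact ⟨i, Finset.mem_filter.mpr ⟨Finset.mem_univ i, hi⟩⟩
  obtain ⟨i₀, hi₀, hmin⟩ := Finset.exists_min_image _ (fun i => lam i / -b i) hne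
  have hbi₀ : b i₀ < 0 := (Finset.mem_filter.mp hi₀).2
  set t := lam i₀ / -b i₀
  have ht : 0 ≤ t := div_nonneg (hlam i₀) (neg_nonneg.mpr hbi₀.le)
  refine ⟨t, i₀, hbi₀, fun i => ?_, ?_⟩
  · rcases lt_or_ge (b i) 0 with hbi | hbi
    · have : t ≤ lam i / -b i := hmin i (Finset.mem_filter.mpr ⟨Finset.mem_univ i, hbi⟩)
      rw [le_div_iff₀ (neg_pos.mpr hbi)] at this
      linarith
    · linarith [hlam i, mul_nonneg ht hbi]
  · simp only [t]
    field_simp [hbi₀.ne]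
    ring

theorem exists_neg_mem_coneOf_compl_singleton {n : ℕ} {ν : Fin (n+1) → (Fin n → ℤ)}
    {b : Fin (n+1) → ℤ} (hwall : ∑ i, b i • ν i = 0) (hb : ∃ i, b i < 0)
    {x : Fin n → ℝ} (hx : x ∈ coneOf ν Set.univ) :
    ∃ i₀, b i₀ < 0 ∧ x ∈ coneOf ν {i₀}ᶜ := by
  obtain ⟨lam, hlam, -, rfl⟩ := hx
  have hwallR : ∑ i, (b i : ℝ) • (fun j => (ν i j : ℝ)) = 0 := by
    funext j
    simpa using congrArg (fun v : Fin n → ℤ => (v j : ℝ)) hwall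
  obtain ⟨t, i₀, hbi₀, hnonneg, hzero⟩ :=
    exists_shift_nonneg_and_eq_zero (b := fun i => (b i : ℝ)) hlam (by exact_mod_cast hb)
  refine ⟨i₀, by exact_mod_cast hbi₀, fun i => lam i + t * b i, hnonneg, fun i hi => ?_, ?_⟩
  · rwa [Set.notMem_compl_iff.mp hi]
  · simp only [add_smul, Finset.sum_add_distrib, mul_smul, ← Finset.smul_sum, hwallR,
      smul_zero, add_zero]

theorem stmt1_general {n : ℕ} (ν : Fin (n+1) → (Fin n → ℤ))
    (b : Fin (n+1) → ℤ) (hwall : ∑ i, b i • ν i = 0)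
    (hJm : 2 ≤ (Finset.univ.filter fun i => b i < 0).card) :
    (∀ J : Set (Fin (n+1)), ¬ ({i | b i < 0} ⊆ J) → coneOf ν J ⊆ coneOf ν Set.univ) ∧
    (∀ x ∈ coneOf ν Set.univ, ∃ J : Set (Fin (n+1)),
      ¬ ({i | b i < 0} ⊆ J) ∧ x ∈ coneOf ν J) := by
  refine ⟨fun J _ => coneOf_mono ν (Set.subset_univ J), fun x hx => ?_⟩
  have hb : ∃ i, b i < 0 := by
    obtain ⟨i, hi⟩ := Finset.card_pos.mp (by omega :
      0 < (Finset.univ.filter fun i => b i < 0).card)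
    exact ⟨i, (Finset.mem_filter.mp hi).2⟩
  obtain ⟨i₀, hbi₀, hxi₀⟩ := exists_neg_mem_coneOf_compl_singleton hwall hb hx
  exact ⟨{i₀}ᶜ, fun hsub => hsub hbi₀ rfl, hxi₀⟩

/-- for a flipping cone `σ₀ = Cone(ν₁,…,ν_{n+1})` with wall relation
`∑ bᵢ νᵢ = 0`, every cone `σ_J` with `J₋ ⊄ J` is contained in `σ₀`, and the
collection `Σ₊ = {σ_J : J₋ ⊄ J}` covers `σ₀`. -/
theorem stmt1 {n : ℕ} (hn : 3 ≤ n) (ν : Fin (n+1) → (Fin n → ℤ))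
    (hprim : ∀ i, Finset.univ.gcd (ν i) = 1)
    (hfull : Submodule.span ℝ (Set.range fun i => (fun j => (ν i j : ℝ))) = ⊤)
    (hconvex : ∀ x ∈ coneOf ν Set.univ, -x ∈ coneOf ν Set.univ → x = 0)
    (b : Fin (n+1) → ℤ) (hwall : ∑ i, b i • ν i = 0)
    (hJm : 2 ≤ (Finset.univ.filter fun i => b i < 0).card)
    (hJp : 2 ≤ (Finset.univ.filter fun i => 0 < b i).card) :
    (∀ J : Set (Fin (n+1)), ¬ ({i | b i < 0} ⊆ J) → coneOf ν J ⊆ coneOf ν Set.univ) ∧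
    (∀ x ∈ coneOf ν Set.univ, ∃ J : Set (Fin (n+1)),
      ¬ ({i | b i < 0} ⊆ J) ∧ x ∈ coneOf ν J) :=
  stmt1_general ν b hwall hJm
end

section
/- Suppose two weight systems d, d' : R → ℚ satisfy: there is c ∈ ℚ_{>0} with d_ρ = c·d'_ρ for all ρ ∉ Δ. Let E be any finite-dimensional vector space equipped with bounded increasing filtrations E^ρ(·) such that for ρ ∈ Δ the filtration has a single full jump (E^ρ(i) = 0 for i < a_ρ, = E for i ≥ a_ρ). Then for any two nonzero subspaces F, G ⊆ E: μ_d(F) − μ_d(G) = c·(μ_{d'}(F) − μ_{d'}(G)), where μ_d(F) = −(1/dim F)·∑_ρ ι_ρ(F)·d_ρ. In particular F maximizes/equalizes slopes with respect to d if and only if it does with respect to d'. -/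
open Module

/-- `ι_ρ(F) = ∑ᵢ i·(dim(F ∩ E^ρ(i)) − dim(F ∩ E^ρ(i−1)))`, as a finite sum. -/
noncomputable def iotaF {E : Type} [AddCommGroup E] [Module ℂ E]
    (filt : ℤ → Submodule ℂ E) (F : Submodule ℂ E) : ℚ :=
  ∑ᶠ i : ℤ, (i : ℚ) *
    ((finrank ℂ ↥(F ⊓ filt i) : ℚ) - (finrank ℂ ↥(F ⊓ filt (i - 1)) : ℚ))

/-- A bounded increasing filtration of `E` by subspaces. -/
def BoundedIncreasing {E : Type} [AddCommGroup E] [Module ℂ E]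
    (filt : ℤ → Submodule ℂ E) : Prop :=
  Monotone filt ∧ (∃ a : ℤ, ∀ i < a, filt i = ⊥) ∧ (∃ b : ℤ, ∀ i ≥ b, filt i = ⊤)

/-- The slope `μ_d(F) = −(1/dim F)·∑_ρ ι_ρ(F)·d_ρ`. -/
noncomputable def slopeF {R : Type} [Fintype R] {E : Type} [AddCommGroup E] [Module ℂ E]
    (filt : R → ℤ → Submodule ℂ E) (d : R → ℚ) (F : Submodule ℂ E) : ℚ :=
  - (1 / (finrank ℂ F : ℚ)) * ∑ ρ, iotaF (filt ρ) F * d ρ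

lemma iota_jump {E : Type} [AddCommGroup E] [Module ℂ E]
    (filt : ℤ → Submodule ℂ E) (a : ℤ)
    (h : ∀ i : ℤ, filt i = if i < a then ⊥ else ⊤) (F : Submodule ℂ E) :
    iotaF filt F = (a : ℚ) * (finrank ℂ F : ℚ) := by
  unfold iotaF
  have hz : ∀ i : ℤ, i ≠ a → (i : ℚ) *
      ((finrank ℂ ↥(F ⊓ filt i) : ℚ) - (finrank ℂ ↥(F ⊓ filt (i - 1)) : ℚ)) = 0 := by
    intro i hi
    rcases lt_or_gt_of_ne hi with hlt | hgt
    · rw [h i, h (i - 1), if_pos hlt, if_pos (by omega)]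
      simp
    · rw [h i, h (i - 1), if_neg (by omega), if_neg (by omega)]
      simp
  rw [finsum_eq_single _ a hz, h a, h (a - 1), if_neg (by omega), if_pos (by omega),
    inf_top_eq, inf_bot_eq]
  simp

/-- if `d_ρ = c·d'_ρ` for all `ρ ∉ Δ` (with `c > 0`), and the filtrations
at `ρ ∈ Δ` have a single full jump, then slope differences with respect to `d` are `c`
times slope differences with respect to `d'`. -/
theorem stmt9 {R : Type} [Fintype R] {E : Type} [AddCommGroup E]
    [Module ℂ E] [FiniteDimensional ℂ E]
    (Δ : Set R) (d d' : R → ℚ) (c : ℚ) (hc : 0 < c)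
    (hprop : ∀ ρ ∉ Δ, d ρ = c * d' ρ)
    (filt : R → ℤ → Submodule ℂ E) (hfilt : ∀ ρ, BoundedIncreasing (filt ρ))
    (a : R → ℤ)
    (hjump : ∀ ρ ∈ Δ, ∀ i : ℤ, filt ρ i = if i < a ρ then ⊥ else ⊤) :
    ∀ F G : Submodule ℂ E, F ≠ ⊥ → G ≠ ⊥ →
      slopeF filt d F - slopeF filt d G =
        c * (slopeF filt d' F - slopeF filt d' G) := by
  intro F G hF hG
  have hdF : (finrank ℂ F : ℚ) ≠ 0 := by
    exact_mod_cast fun h => hF (Submodule.finrank_eq_zero.mp (by exact_mod_cast h))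
  have hdG : (finrank ℂ G : ℚ) ≠ 0 := by
    exact_mod_cast fun h => hG (Submodule.finrank_eq_zero.mp (by exact_mod_cast h))
  unfold slopeF
  rw [Finset.mul_sum, Finset.mul_sum, Finset.mul_sum, Finset.mul_sum,
    ← Finset.sum_sub_distrib, ← Finset.sum_sub_distrib, Finset.mul_sum]
  apply Finset.sum_congr rfl
  intro ρ _
  by_cases hρ : ρ ∈ Δ
  · rw [iota_jump (filt ρ) (a ρ) (hjump ρ hρ) F, iota_jump (filt ρ) (a ρ) (hjump ρ hρ) G]
    field_simp
    ring
  · rw [hprop ρ hρ]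
    ring
end

section
/- In the quotient group A = ℤ⁵ / ⟨(⟨m,u₀⟩,⟨m,u₁⟩,⟨m,u₂⟩,⟨m,u₃⟩,⟨m,u₄⟩) : m ∈ ℤ³⟩ with u₀ = −(e₁+e₂+e₃), u₁ = e₁, u₂ = e₁+e₂−e₃, u₃ = e₂, u₄ = e₃, the group A is free of rank 2, generated by the classes of D₀ and D₂. -/
/-- The ray generators of the example of Section 5.2. -/
def uRay : Fin 5 → (Fin 3 → ℤ) :=
  ![![-1,-1,-1], ![1,0,0], ![1,1,-1], ![0,1,0], ![0,0,1]]

/-- The lattice of relations `⟨(⟨m,u₀⟩,…,⟨m,u₄⟩) : m ∈ ℤ³⟩` inside `ℤ⁵`. -/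
def relLattice : Submodule ℤ (Fin 5 → ℤ) :=
  Submodule.span ℤ (Set.range fun m : Fin 3 → ℤ => fun i => ∑ j, m j * uRay i j)

/-- The class of the divisor `Dᵢ` in `A = ℤ⁵ / relLattice`. -/
def divClass (i : Fin 5) : (Fin 5 → ℤ) ⧸ relLattice :=
  Submodule.Quotient.mk (Pi.single i 1)

/-- An auxiliary linear map `ℤ⁵ → ℤ²` vanishing on the relation lattice. -/
def phiAux : (Fin 5 → ℤ) →ₗ[ℤ] (Fin 2 → ℤ) where
  toFun x := ![x 0 + x 1 + x 3 + x 4, - x 1 + x 2 - x 3 + x 4]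
  map_add' x y := by
    funext i; fin_cases i <;> simp <;> ring
  map_smul' c x := by
    funext i; fin_cases i <;> simp <;> ring

lemma relLattice_le_ker : relLattice ≤ LinearMap.ker phiAux := by
  rw [relLattice, Submodule.span_le]
  rintro _ ⟨m, rfl⟩
  simp only [SetLike.mem_coe, LinearMap.mem_ker]
  funext i
  fin_cases i <;>
    simp [phiAux, uRay, Fin.sum_univ_three, Matrix.vecHead, Matrix.vecTail] <;> ring

/-- The induced map on the quotient. -/
def phiBar : ((Fin 5 → ℤ) ⧸ relLattice) →ₗ[ℤ] (Fin 2 → ℤ) :=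
  relLattice.liftQ phiAux relLattice_le_ker

lemma phiBar_divClass0 : phiBar (divClass 0) = ![1, 0] := by
  show phiAux (Pi.single 0 1) = _
  funext i; fin_cases i <;> simp [phiAux, Pi.single_apply]

lemma phiBar_divClass2 : phiBar (divClass 2) = ![0, 1] := by
  show phiAux (Pi.single 2 1) = _
  funext i; fin_cases i <;> simp [phiAux, Pi.single_apply]

lemma col_mem (j : Fin 3) : (fun i => uRay i j) ∈ relLattice := by
  apply Submodule.subset_span
  exact ⟨Pi.single j 1, by funext i; simp [Pi.single_apply, Fin.sum_univ_three]⟩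

lemma mk_single_mem (i : Fin 5) :
    Submodule.Quotient.mk (Pi.single i 1) ∈
      Submodule.span ℤ ({divClass 0, divClass 2} : Set ((Fin 5 → ℤ) ⧸ relLattice)) := by
  have h0 : divClass 0 ∈ Submodule.span ℤ ({divClass 0, divClass 2} :
      Set ((Fin 5 → ℤ) ⧸ relLattice)) := Submodule.subset_span (by simp)
  have h2 : divClass 2 ∈ Submodule.span ℤ ({divClass 0, divClass 2} :
      Set ((Fin 5 → ℤ) ⧸ relLattice)) := Submodule.subset_span (by simp)
  fin_cases i
  · exact h0
  · -- e1 ≡ e0 - e2 via column 0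
    have : (divClass 1 : (Fin 5 → ℤ) ⧸ relLattice) = divClass 0 - divClass 2 := by
      rw [divClass, divClass, divClass, ← Submodule.Quotient.mk_sub, Submodule.Quotient.eq]
      have := col_mem 0
      convert this using 1
      funext i; fin_cases i <;> simp [uRay, Pi.single_apply, Matrix.vecHead, Matrix.vecTail]
    show divClass 1 ∈ _
    rw [this]; exact Submodule.sub_mem _ h0 h2
  · exact h2
  · -- e3 ≡ e0 - e2 via column 1
    have : (divClass 3 : (Fin 5 → ℤ) ⧸ relLattice) = divClass 0 - divClass 2 := by
      rw [divClass, divClass, divClass, ← Submodule.Quotient.mk_sub, Submodule.Quotient.eq]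
      have := col_mem 1
      convert this using 1
      funext i; fin_cases i <;> simp [uRay, Pi.single_apply, Matrix.vecHead, Matrix.vecTail]
    show divClass 3 ∈ _
    rw [this]; exact Submodule.sub_mem _ h0 h2
  · -- e4 ≡ e0 + e2 via column 2
    have : (divClass 4 : (Fin 5 → ℤ) ⧸ relLattice) = divClass 0 + divClass 2 := by
      rw [divClass, divClass, divClass, ← Submodule.Quotient.mk_add, Submodule.Quotient.eq]
      have := col_mem 2
      convert this using 1
      funext i; fin_cases i <;> simp [uRay, Pi.single_apply, Matrix.vecHead, Matrix.vecTail]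
    show divClass 4 ∈ _
    rw [this]; exact Submodule.add_mem _ h0 h2

/-- the group `A = ℤ⁵/⟨relations⟩` is free of rank 2, generated by the
classes of `D₀` and `D₂` (which are linearly independent and span). -/
theorem stmt13 :
    LinearIndependent ℤ ![divClass 0, divClass 2] ∧
    Submodule.span ℤ ({divClass 0, divClass 2} : Set ((Fin 5 → ℤ) ⧸ relLattice)) = ⊤ := by
  constructor
  · rw [Fintype.linearIndependent_iff]
    intro g hg
    have h := congrArg phiBar hg
    rw [map_sum, map_zero] at h
    simp only [Fin.sum_univ_two, Matrix.cons_val_zero, Matrix.cons_val_one, Matrix.head_cons,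
      map_smul, phiBar_divClass0, phiBar_divClass2] at h
    have h0 := congrFun h 0
    have h1 := congrFun h 1
    simp at h0 h1
    intro i; fin_cases i <;> simpa
  · rw [eq_top_iff]
    rintro x -
    obtain ⟨y, rfl⟩ := Submodule.Quotient.mk_surjective _ x
    have hy : (Submodule.Quotient.mk y : (Fin 5 → ℤ) ⧸ relLattice) =
        ∑ i, y i • Submodule.Quotient.mk (Pi.single i 1) := by
      have hrep : y = ∑ i, y i • Pi.single i (1 : ℤ) := by
        funext j
        simp [Pi.single_apply, Finset.sum_apply, mul_ite]
      calc (Submodule.Quotient.mk y : (Fin 5 → ℤ) ⧸ relLattice) = relLattice.mkQ y := rfl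
        _ = relLattice.mkQ (∑ i, y i • Pi.single i 1) := by rw [← hrep]
        _ = ∑ i, y i • relLattice.mkQ (Pi.single i 1) := by rw [map_sum]; simp only [map_smul]
    rw [hy]
    exact Submodule.sum_mem _ fun i _ => Submodule.smul_mem _ _ (mk_single_mem i)
end
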